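/- There exists a constant a > 0 such that for all positive integers m, the number p(m) of partitions of m satisfies log p(m) ≤ a · √m. -/

import Mathlib

/-!
Comparing coefficients in Euler's product gives `p(n) xⁿ ≤ ∏_{k ≤ n} (1 - xᵏ)⁻¹` for `0 ≤ x < 1`.
For `x = e^{-t}`, expand each `-log (1 - xᵏ)` as `∑_j x^{jk} / j` and sum over `k` first: the inner
geometric sum is at most `1 / (j t)`, so `log p(n) ≤ n t + ζ(2) / t`, and `t = 1 / √n` balances the
two terms.
-/

open Finset Real

namespace Nat.Partition

variable {n : ℕ}

lemma mem_Icc_of_mem_parts (p : n.Partition) {k : ℕ} (hk : k ∈ p.parts) : k ∈ Icc 1 n :=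
  mem_Icc.mpr ⟨p.parts_pos hk, p.le_of_mem_parts hk⟩

lemma count_parts_le (p : n.Partition) (k : ℕ) : p.parts.count k ≤ n :=
  calc p.parts.count k ≤ Multiset.card p.parts := Multiset.count_le_card _ _
    _ ≤ p.parts.sum := by
        simpa using Multiset.card_nsmul_le_sum (s := p.parts) (a := 1) fun _ ↦ p.parts_pos
    _ = n := p.parts_sum

lemma sum_Icc_count_parts_mul (p : n.Partition) : ∑ k ∈ Icc 1 n, p.parts.count k * k = n :=
  (mem_finsuppAntidiag.mp p.toFinsuppAntidiag_mem_finsuppAntidiag).1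

lemma prod_Icc_pow_count_parts {M : Type*} [CommMonoid M] (p : n.Partition) (x : M) :
    ∏ k ∈ Icc 1 n, (x ^ k) ^ p.parts.count k = x ^ n := by
  simp_rw [← pow_mul, prod_pow_eq_pow_sum, mul_comm _ (p.parts.count _),
    sum_Icc_count_parts_mul]

lemma injective_count_parts :
    Function.Injective fun (p : n.Partition) (k : Icc 1 n) ↦ p.parts.count (k : ℕ) := by
  intro p q h
  ext k
  by_cases hk : k ∈ Icc 1 n
  · exact congrFun h ⟨k, hk⟩
  · rw [Multiset.count_eq_zero_of_notMem (hk ∘ p.mem_Icc_of_mem_parts),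
      Multiset.count_eq_zero_of_notMem (hk ∘ q.mem_Icc_of_mem_parts)]

theorem card_mul_pow_le_prod_inv_one_sub {K : Type*} [Field K] [LinearOrder K]
    [IsStrictOrderedRing K] {x : K} (hx₀ : 0 ≤ x) (hx₁ : x < 1) (n : ℕ) :
    Fintype.card n.Partition * x ^ n ≤ ∏ k ∈ Icc 1 n, (1 - x ^ k)⁻¹ := by
  classical
  set count : n.Partition → Icc 1 n → ℕ := fun p k ↦ p.parts.count (k : ℕ)
  set weight : (Icc 1 n → ℕ) → K := fun c ↦ ∏ k : Icc 1 n, (x ^ (k : ℕ)) ^ c k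
  have hweight (p : n.Partition) : weight (count p) = x ^ n := by
    rw [← p.prod_Icc_pow_count_parts x, ← prod_coe_sort]
  have hsub : univ.image count ⊆ Fintype.piFinset fun _ ↦ range (n + 1) := by
    simp only [subset_iff, mem_image, Fintype.mem_piFinset, mem_range]
    rintro _ ⟨p, -, rfl⟩ k
    exact Nat.lt_succ_of_le (p.count_parts_le (k : ℕ))
  calc (Fintype.card n.Partition : K) * x ^ n = ∑ c ∈ univ.image count, weight c := by
        rw [sum_image fun p _ q _ h ↦ injective_count_parts h, sum_congr rfl fun p _ ↦ hweight p,
          sum_const, Finset.card_univ, nsmul_eq_mul]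
    _ ≤ ∑ c ∈ Fintype.piFinset fun _ ↦ range (n + 1), weight c :=
        sum_le_sum_of_subset_of_nonneg hsub fun _ _ _ ↦ by positivity
    _ = ∏ k : Icc 1 n, ∑ j ∈ range (n + 1), (x ^ (k : ℕ)) ^ j := (prod_univ_sum _ _).symm
    _ ≤ ∏ k : Icc 1 n, (1 - x ^ (k : ℕ))⁻¹ := by
        refine prod_le_prod (fun _ _ ↦ by positivity) fun k _ ↦ ?_
        have hxk : x ^ (k : ℕ) < 1 :=
          pow_lt_one₀ hx₀ hx₁ (Nat.one_le_iff_ne_zero.mp (mem_Icc.mp k.2).1)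
        simpa [← Finset.range_eq_Ico] using
          geom_sum_Ico_le_of_lt_one (m := 0) (n := n + 1) (pow_nonneg hx₀ _) hxk
    _ = ∏ k ∈ Icc 1 n, (1 - x ^ k)⁻¹ := prod_coe_sort (Icc 1 n) fun k ↦ (1 - x ^ k)⁻¹

end Nat.Partition

lemma sum_Icc_exp_neg_pow_le_inv {u : ℝ} (hu : 0 < u) (n : ℕ) :
    ∑ k ∈ Icc 1 n, exp (-u) ^ k ≤ u⁻¹ := by
  have hy : exp (-u) < 1 := Real.exp_lt_one_iff.mpr (neg_lt_zero.mpr hu)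
  calc ∑ k ∈ Icc 1 n, exp (-u) ^ k ≤ exp (-u) ^ 1 / (1 - exp (-u)) := by
        rw [← Finset.Ico_add_one_right_eq_Icc]
        exact geom_sum_Ico_le_of_lt_one (exp_pos _).le hy
    _ ≤ u⁻¹ := by
        rw [pow_one, div_le_iff₀ (sub_pos.mpr hy)]
        have := mul_le_mul_of_nonneg_right (add_one_le_exp u) (exp_pos (-u)).le
        rw [← exp_add, add_neg_cancel, exp_zero] at this
        field_simp
        linarith

lemma hasSum_one_div_nat_add_one_sq :
    HasSum (fun j : ℕ ↦ 1 / ((j : ℝ) + 1) ^ 2) (π ^ 2 / 6) := by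
  simpa using (hasSum_nat_add_iff' 1).mpr hasSum_zeta_two

lemma sum_Icc_neg_log_one_sub_exp_neg_pow_le {t : ℝ} (ht : 0 < t) (n : ℕ) :
    ∑ k ∈ Icc 1 n, -log (1 - exp (-t) ^ k) ≤ π ^ 2 / 6 / t := by
  have hlog : HasSum (fun j : ℕ ↦ ∑ k ∈ Icc 1 n, (exp (-t) ^ k) ^ (j + 1) / (j + 1))
      (∑ k ∈ Icc 1 n, -log (1 - exp (-t) ^ k)) := by
    refine hasSum_sum fun k hk ↦ hasSum_pow_div_log_of_abs_lt_one ?_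
    rw [abs_of_nonneg (by positivity)]
    exact pow_lt_one₀ (exp_pos _).le (Real.exp_lt_one_iff.mpr (neg_lt_zero.mpr ht))
      (Nat.one_le_iff_ne_zero.mp (mem_Icc.mp hk).1)
  refine hasSum_le (fun j ↦ ?_) hlog (hasSum_one_div_nat_add_one_sq.div_const t)
  have hj : (0 : ℝ) < j + 1 := by positivity
  calc ∑ k ∈ Icc 1 n, (exp (-t) ^ k) ^ (j + 1) / (j + 1)
      = (∑ k ∈ Icc 1 n, exp (-((j + 1) * t)) ^ k) / (j + 1) := by
        rw [sum_div]
        refine sum_congr rfl fun k _ ↦ ?_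
        rw [← pow_mul, mul_comm k, pow_mul, ← exp_nat_mul]
        push_cast
        ring_nf
    _ ≤ ((j + 1) * t)⁻¹ / (j + 1) := by
        gcongr
        exact sum_Icc_exp_neg_pow_le_inv (by positivity) n
    _ = 1 / ((j : ℝ) + 1) ^ 2 / t := by
        field_simp

theorem log_card_partition_le_mul_add_div {t : ℝ} (ht : 0 < t) (n : ℕ) :
    log (Fintype.card n.Partition) ≤ n * t + π ^ 2 / 6 / t := by
  have hx₁ : exp (-t) < 1 := Real.exp_lt_one_iff.mpr (neg_lt_zero.mpr ht)
  have hfactor : ∀ k ∈ Icc 1 n, 0 < 1 - exp (-t) ^ k := fun k hk ↦ sub_pos.mpr <|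
    pow_lt_one₀ (exp_pos _).le hx₁ (Nat.one_le_iff_ne_zero.mp (mem_Icc.mp hk).1)
  have hcard : (0 : ℝ) < Fintype.card n.Partition := mod_cast Fintype.card_pos
  have hlog := log_le_log (by positivity)
    (Nat.Partition.card_mul_pow_le_prod_inv_one_sub (exp_pos (-t)).le hx₁ n)
  rw [log_mul hcard.ne' (by positivity), log_pow, log_exp,
    log_prod fun k hk ↦ (inv_pos.mpr (hfactor k hk)).ne'] at hlog
  simp only [log_inv] at hlog
  linarith [sum_Icc_neg_log_one_sub_exp_neg_pow_le ht n]

theorem log_card_partition_le_mul_sqrt (n : ℕ) :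
    log (Fintype.card n.Partition) ≤ (1 + π ^ 2 / 6) * √n := by
  rcases n.eq_zero_or_pos with rfl | hn
  · simp
  have hs : 0 < √(n : ℝ) := sqrt_pos.mpr (mod_cast hn)
  convert log_card_partition_le_mul_add_div (inv_pos.mpr hs) n using 1
  rw [div_inv_eq_mul, ← div_eq_mul_inv, div_sqrt]
  ring

theorem stmt_5 :
    ∃ a : ℝ, 0 < a ∧ ∀ m : ℕ, 1 ≤ m →
      Real.log (Fintype.card (Nat.Partition m)) ≤ a * Real.sqrt m :=
  ⟨1 + π ^ 2 / 6, by positivity, fun m _ ↦ log_card_partition_le_mul_sqrt m⟩
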